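/- Let 𝒫 be a configuration of n points in general position in the plane whose convex hull has size k. Let 3 ≤ m ≤ n with m ≠ k, and let Q_1, ..., Q_m be m points of 𝒫 in convex position, listed in their cyclic order. Then n(Q_1,Q_2) + n(Q_2,Q_3) + ... + n(Q_{m−1},Q_m) + n(Q_m,Q_1) < n² − (m+1)n + m. -/

import Mathlib

/-!
The cyclic sum counts the pairs (`e`, `i`) of a two-point subset `e` of the configuration and an
edge `Q i Q (i+1)` of the polygon whose endpoints are strictly separated by the line through `e`.
That line meets the boundary of the convex polygon at most twice, and each vertex of the polygon
lying in `e` accounts for one of these meetings, so `e` is counted at most `2 - #(e ∩ polygon)`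
times; summed over all pairs, these bounds add up to exactly `n² - (m+1)n + m`. If `m ≠ k`, some
point `Z` of the configuration lies outside the polygon (otherwise the hull vertices would be the
`Q i`), and the tangent from `Z` to the polygon, touching it at a vertex `Q a`, separates no edge:
the pair `{Q a, Z}` is counted `0 < 2 - 1` times.
-/

open scoped Classical

noncomputable section

/-- The set Pts is in general position: no three distinct points are collinear. -/
def GenPos (Pts : Finset (ℝ × ℝ)) : Prop :=
  ∀ A ∈ Pts, ∀ B ∈ Pts, ∀ C ∈ Pts, A ≠ B → A ≠ C → B ≠ C →
    ¬ Collinear ℝ ({A, B, C} : Set (ℝ × ℝ))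

/-- `sepCount Pts P Q` is the number of unordered pairs `{R, S}` of points of `Pts \ {P, Q}`
such that the line through `R` and `S` strictly separates `P` and `Q`. -/
def sepCount (Pts : Finset (ℝ × ℝ)) (P Q : ℝ × ℝ) : ℕ :=
  ((Finset.powersetCard 2 (Pts \ {P, Q})).filter
    (fun s => (affineSpan ℝ (↑s : Set (ℝ × ℝ))).SOppSide P Q)).card

/-- The vertices of the convex hull of `Pts` (its extreme points). -/
def hullVertices (Pts : Finset (ℝ × ℝ)) : Set (ℝ × ℝ) :=
  Set.extremePoints ℝ (convexHull ℝ (↑Pts : Set (ℝ × ℝ)))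

/-- `Q : ZMod k → ℝ × ℝ` lists the points of `S` in convex position, in cyclic order:
`Q` is an injective enumeration of `S` and, for every `i`, all points of `S` other than
`Q i` and `Q (i+1)` lie strictly on the same side of the line through `Q i` and `Q (i+1)`
(i.e. each consecutive pair spans an edge of the convex hull of `S`). -/
def IsConvexCycle (k : ℕ) (S : Set (ℝ × ℝ)) (Q : ZMod k → ℝ × ℝ) : Prop :=
  Function.Injective Q ∧ Set.range Q = S ∧
    ∀ i : ZMod k, ∀ x ∈ S, ∀ y ∈ S,
      x ∉ ({Q i, Q (i + 1)} : Set (ℝ × ℝ)) → y ∉ ({Q i, Q (i + 1)} : Set (ℝ × ℝ)) →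
        (affineSpan ℝ ({Q i, Q (i + 1)} : Set (ℝ × ℝ))).SSameSide x y

open Finset

section AffineFunctional

variable {V P : Type*} [AddCommGroup V] [Module ℝ V] [AddTorsor V P]
  {f : P →ᵃ[ℝ] ℝ} {s : AffineSubspace ℝ P} {x y z : P}

lemma Wbtw.apply_pos (h : Wbtw ℝ x y z) (hx : 0 < f x) (hz : 0 < f z) : 0 < f y := by
  obtain ⟨t, ⟨ht0, ht1⟩, rfl⟩ := h
  rw [f.apply_lineMap, AffineMap.lineMap_apply_ring]
  rcases ht1.lt_or_eq with ht1 | rfl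
  · nlinarith [mul_pos (sub_pos.2 ht1) hx, mul_nonneg ht0 hz.le]
  · simpa using hz

lemma Sbtw.apply_pos (h : Sbtw ℝ x y z) (hx : 0 ≤ f x) (hz : 0 ≤ f z)
    (hxz : 0 < f x ∨ 0 < f z) : 0 < f y := by
  obtain ⟨⟨t, ⟨ht0, ht1⟩, rfl⟩, -⟩ := sbtw_iff_mem_image_Ioo_and_ne.1 h
  rw [f.apply_lineMap, AffineMap.lineMap_apply_ring]
  rcases hxz with h | h <;> nlinarith

lemma exists_wbtw_apply_eq_zero (h : f x * f y ≤ 0) : ∃ p, Wbtw ℝ x p y ∧ f p = 0 := by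
  rcases eq_or_ne (f x) 0 with hx | hx
  · exact ⟨x, wbtw_self_left ℝ x y, hx⟩
  -- the zero of `t ↦ (1 - t) f x + t f y`, written so that `0 ≤ t ≤ 1` is visible
  have hd : 0 < f x ^ 2 - f x * f y := by
    have : 0 < f x ^ 2 := by positivity
    linarith
  have hne : f x - f y ≠ 0 := fun h0 => by
    rw [sub_eq_zero.1 h0, ← sq, sub_self] at hd
    exact hd.false
  refine ⟨AffineMap.lineMap x y (f x ^ 2 / (f x ^ 2 - f x * f y)),
    ⟨_, ⟨by positivity, (div_le_one hd).2 (by linarith)⟩, rfl⟩, ?_⟩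
  rw [f.apply_lineMap, AffineMap.lineMap_apply_ring']
  field_simp
  ring

lemma AffineSubspace.SSameSide.mul_apply_pos (hf : ∀ p, f p = 0 ↔ p ∈ s)
    (h : s.SSameSide x y) : 0 < f x * f y := by
  have hx : f x ≠ 0 := fun h0 => h.2.1 ((hf x).1 h0)
  have hy : f y ≠ 0 := fun h0 => h.2.2 ((hf y).1 h0)
  refine (mul_ne_zero hx hy).symm.lt_of_le (not_lt.1 fun hneg => ?_)
  obtain ⟨p, hp, hp0⟩ := exists_wbtw_apply_eq_zero hneg.le
  exact h.not_wOppSide (hp.wOppSide₁₃ ((hf p).1 hp0))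

lemma AffineSubspace.SOppSide.mul_apply_neg (hf : ∀ p, f p = 0 ↔ p ∈ s)
    (h : s.SOppSide x y) : f x * f y < 0 := by
  have hx : f x ≠ 0 := fun h0 => h.2.1 ((hf x).1 h0)
  obtain ⟨p, hp, hxpy⟩ := h.exists_sbtw
  obtain ⟨⟨t, ⟨ht0, ht1⟩, rfl⟩, -⟩ := sbtw_iff_mem_image_Ioo_and_ne.1 hxpy
  have h0 := (hf _).2 hp
  rw [f.apply_lineMap, AffineMap.lineMap_apply_ring] at h0
  have hpos : 0 < (1 - t) * f x ^ 2 := by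
    have : 0 < 1 - t := by linarith
    positivity
  have key : t * (f x * f y) = -((1 - t) * f x ^ 2) := by linear_combination f x * h0
  by_contra! hxy
  nlinarith

lemma card_le_two_of_forall_exists_zero {ι : Type*} {s : Finset ι} {g : ι → P →ᵃ[ℝ] ℝ}
    {R S : P} (h : ∀ w ∈ s, ∃ p ∈ line[ℝ, R, S], g w p = 0 ∧ ∀ w' ∈ s, w' ≠ w → 0 < g w' p) :
    #s ≤ 2 := by
  choose! p hpL hp0 hpos using h
  by_contra! hs
  obtain ⟨u, hu, v, hv, w, hw, huv, huw, hvw⟩ := Finset.two_lt_card.1 hs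
  -- of three points on a line one lies between the other two, where its own functional
  -- would be positive
  rcases (collinear_triple_of_mem_affineSpan_pair (hpL u hu) (hpL v hv)
    (hpL w hw)).wbtw_or_wbtw_or_wbtw with h | h | h
  · exact (h.apply_pos (hpos u hu v hv huv.symm) (hpos w hw v hv hvw)).ne' (hp0 v hv)
  · exact (h.apply_pos (hpos v hv w hw hvw.symm) (hpos u hu w hw huw.symm)).ne' (hp0 w hw)
  · exact (h.apply_pos (hpos w hw u hu huw) (hpos v hv u hu huv)).ne' (hp0 u hu)

end AffineFunctional

/-- Twice the signed area of the triangle `A B P`, as an affine function of `P`. -/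
def orient (A B : ℝ × ℝ) : (ℝ × ℝ) →ᵃ[ℝ] ℝ where
  toFun P := (B.1 - A.1) * (P.2 - A.2) - (B.2 - A.2) * (P.1 - A.1)
  linear := (B.1 - A.1) • LinearMap.snd ℝ ℝ ℝ - (B.2 - A.2) • LinearMap.fst ℝ ℝ ℝ
  map_vadd' P v := by simp; ring

lemma orient_apply (A B P : ℝ × ℝ) :
    orient A B P = (B.1 - A.1) * (P.2 - A.2) - (B.2 - A.2) * (P.1 - A.1) := rfl

lemma orient_eq_zero_iff {A B : ℝ × ℝ} (hAB : A ≠ B) (P : ℝ × ℝ) :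
    orient A B P = 0 ↔ P ∈ line[ℝ, A, B] := by
  rw [mem_affineSpan_pair_iff_exists_lineMap_eq]
  constructor
  · intro h
    have hd : (B.1 - A.1) ^ 2 + (B.2 - A.2) ^ 2 ≠ 0 := by
      intro h0
      exact hAB (Prod.ext (by nlinarith) (by nlinarith))
    -- the parameter of the orthogonal projection of `P` on the line
    refine ⟨((B.1 - A.1) * (P.1 - A.1) + (B.2 - A.2) * (P.2 - A.2)) /
      ((B.1 - A.1) ^ 2 + (B.2 - A.2) ^ 2), ?_⟩
    rw [orient_apply] at h
    ext <;> simp only [AffineMap.lineMap_apply_module, Prod.fst_add, Prod.snd_add,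
      Prod.smul_fst, Prod.smul_snd, smul_eq_mul] <;> field_simp
    · linear_combination (B.2 - A.2) * h
    · linear_combination -(B.1 - A.1) * h
  · rintro ⟨r, rfl⟩
    have hA : orient A B A = 0 := by rw [orient_apply]; ring
    have hB : orient A B B = 0 := by rw [orient_apply]; ring
    rw [AffineMap.apply_lineMap, hA, hB, AffineMap.lineMap_same_apply]

lemma exists_forall_orient_nonpos {ι : Type*} [Finite ι] [Nonempty ι] {Q : ι → ℝ × ℝ}
    {Z : ℝ × ℝ} (hZ : Z ∉ convexHull ℝ (Set.range Q)) :
    ∃ a, ∀ i, orient Z (Q a) (Q i) ≤ 0 := by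
  obtain ⟨f, u, hfZ, hfQ⟩ := geometric_hahn_banach_point_closed (convex_convexHull ℝ _)
    ((Set.finite_range Q).isClosed_convexHull ℝ) hZ
  have hf : ∀ v : ℝ × ℝ, f v = f (1, 0) * v.1 + f (0, 1) * v.2 := fun v => by
    conv_lhs => rw [show v = v.1 • ((1 : ℝ), (0 : ℝ)) + v.2 • ((0 : ℝ), (1 : ℝ)) by ext <;> simp]
    simp only [map_add, map_smul, smul_eq_mul]
    ring
  set α := f (1, 0)
  set β := f (0, 1)
  have hφ : ∀ i, 0 < α * (Q i - Z).1 + β * (Q i - Z).2 := fun i => by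
    rw [← hf, map_sub]
    linarith [hfQ _ (subset_convexHull ℝ _ ⟨i, rfl⟩)]
  -- the vectors `Q i - Z` lie in the half-plane `f > 0`, where directions are ordered by the
  -- ratio of the component orthogonal to `f` to the `f`-component; `Q a` is the extreme one
  obtain ⟨a, ha⟩ := Finite.exists_min fun i =>
    (β * (Q i - Z).1 - α * (Q i - Z).2) / (α * (Q i - Z).1 + β * (Q i - Z).2)
  refine ⟨a, fun i => ?_⟩
  have hαβ : 0 < α ^ 2 + β ^ 2 := by
    by_contra! h0
    have hα : α = 0 := pow_eq_zero_iff two_ne_zero |>.1 (by nlinarith [sq_nonneg α, sq_nonneg β])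
    have hβ : β = 0 := pow_eq_zero_iff two_ne_zero |>.1 (by nlinarith [sq_nonneg α, sq_nonneg β])
    simpa [hα, hβ] using hφ a
  have hmin := (div_le_div_iff₀ (hφ a) (hφ i)).1 (ha i)
  have key : (α ^ 2 + β ^ 2) * orient Z (Q a) (Q i) =
      (β * (Q a - Z).1 - α * (Q a - Z).2) * (α * (Q i - Z).1 + β * (Q i - Z).2) -
      (β * (Q i - Z).1 - α * (Q i - Z).2) * (α * (Q a - Z).1 + β * (Q a - Z).2) := by
    simp only [orient_apply, Prod.fst_sub, Prod.snd_sub]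
    ring
  nlinarith

lemma mem_extremePoints_convexHull_of_notMem_convexHull_sdiff {E : Type*}
    [NormedAddCommGroup E] [NormedSpace ℝ E] {s : Set E} {x : E} (hs : s.Finite) (hx : x ∈ s)
    (hxs : x ∉ convexHull ℝ (s \ {x})) : x ∈ (convexHull ℝ s).extremePoints ℝ := by
  by_contra h
  have hext : (convexHull ℝ s).extremePoints ℝ ⊆ s \ {x} := fun y hy =>
    ⟨extremePoints_convexHull_subset hy, fun hyx => h (hyx ▸ hy)⟩
  -- Krein–Milman: the hull is spanned by its extreme points, which all lie in `s \ {x}`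
  have hsub : convexHull ℝ s ⊆ convexHull ℝ (s \ {x}) := calc
    convexHull ℝ s = closure (convexHull ℝ ((convexHull ℝ s).extremePoints ℝ)) :=
      (closure_convexHull_extremePoints (hs.isCompact_convexHull ℝ) (convex_convexHull ℝ s)).symm
    _ ⊆ closure (convexHull ℝ (s \ {x})) := closure_mono (convexHull_mono hext)
    _ = convexHull ℝ (s \ {x}) := (hs.sdiff.isClosed_convexHull ℝ).closure_eq
  exact hxs (hsub (subset_convexHull ℝ s hx))

lemma sepCount_eq_card_filter (Pts : Finset (ℝ × ℝ)) (P Q : ℝ × ℝ) :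
    sepCount Pts P Q = #((powersetCard 2 Pts).filter fun e : Finset (ℝ × ℝ) =>
      (affineSpan ℝ (e : Set (ℝ × ℝ))).SOppSide P Q) := by
  -- the `do` block in `sepCount` is the image of the pairs in `Set (ℝ × ℝ)`; removing `P` and
  -- `Q` from `Pts` changes nothing, as the separating line avoids them
  rw [sepCount, bind_pure_comp, Finset.fmap_def, filter_image]
  refine (card_image_of_injective _ SetLike.coe_injective).trans ?_
  congr 1
  ext e
  simp only [mem_filter, mem_powersetCard, subset_sdiff, disjoint_insert_right,
    disjoint_singleton_right]
  constructor
  · tauto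
  · rintro ⟨⟨he, hcard⟩, h⟩
    exact ⟨⟨⟨he, fun hP => h.2.1 (subset_affineSpan ℝ _ hP),
      fun hQ => h.2.2 (subset_affineSpan ℝ _ hQ)⟩, hcard⟩, h⟩

lemma card_filter_mem_powersetCard_two {α : Type*} [DecidableEq α] {s : Finset α} {x : α}
    (hx : x ∈ s) : #{e ∈ powersetCard 2 s | x ∈ e} = #s - 1 := by
  simpa using card_filter_powersetCard_subset {x} s 2 (singleton_subset_iff.2 hx) (by simp)

lemma sum_card_filter_mem_powersetCard_two {ι α : Type*} [DecidableEq α] {s : Finset α}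
    {t : Finset ι} {f : ι → α} (hf : ∀ i ∈ t, f i ∈ s) :
    ∑ e ∈ powersetCard 2 s, #{i ∈ t | f i ∈ e} = #t * (#s - 1) := calc
  _ = ∑ i ∈ t, #{e ∈ powersetCard 2 s | f i ∈ e} :=
    (sum_card_bipartiteAbove_eq_sum_card_bipartiteBelow fun i e => f i ∈ e).symm
  _ = ∑ i ∈ t, (#s - 1) := sum_congr rfl fun i hi => card_filter_mem_powersetCard_two (hf i hi)
  _ = #t * (#s - 1) := by rw [sum_const, smul_eq_mul]

lemma ZMod.sum_range_natCast {M : Type*} [AddCommMonoid M] {m : ℕ} [NeZero m]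
    (f : ZMod m → M) : ∑ i ∈ range m, f i = ∑ j, f j :=
  sum_nbij' (↑) ZMod.val (fun _ _ => mem_univ _) (fun j _ => mem_range.2 j.val_lt)
    (fun _ hi => ZMod.val_cast_of_lt (mem_range.1 hi)) (fun j _ => ZMod.natCast_zmod_val j)
    (fun _ _ => rfl)

section ConvexCycle

lemma ZMod.add_natCast_ne_self {m k : ℕ} (i : ZMod m) (hk : 0 < k) (hkm : k < m) :
    i + k ≠ i := by
  rw [Ne, add_eq_left, ZMod.natCast_eq_zero_iff]
  exact fun h => (Nat.le_of_dvd hk h).not_gt hkm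

lemma ZMod.add_one_ne_self {m : ℕ} (hm : 1 < m) (i : ZMod m) : i + 1 ≠ i := by
  simpa only [Nat.cast_one] using ZMod.add_natCast_ne_self i one_pos hm

lemma ZMod.add_two_ne_self {m : ℕ} (hm : 2 < m) (i : ZMod m) : i + 2 ≠ i := by
  simpa only [Nat.cast_ofNat] using ZMod.add_natCast_ne_self i two_pos hm

variable {m : ℕ} {Q : ZMod m → ℝ × ℝ}

/-- The factor `orient … (Q (i + 2))` fixes the sign whatever the orientation of the cycle. -/
def edgeFun (Q : ZMod m → ℝ × ℝ) (i : ZMod m) : (ℝ × ℝ) →ᵃ[ℝ] ℝ :=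
  orient (Q i) (Q (i + 1)) (Q (i + 2)) • orient (Q i) (Q (i + 1))

def vertexFun (Q : ZMod m → ℝ × ℝ) (a : ZMod m) : (ℝ × ℝ) →ᵃ[ℝ] ℝ :=
  edgeFun Q (a - 1) + edgeFun Q a

lemma edgeFun_apply_left (i : ZMod m) : edgeFun Q i (Q i) = 0 := by
  simp only [edgeFun, AffineMap.coe_smul, Pi.smul_apply, orient_apply, smul_eq_mul]
  ring

lemma edgeFun_apply_right (i : ZMod m) : edgeFun Q i (Q (i + 1)) = 0 := by
  simp only [edgeFun, AffineMap.coe_smul, Pi.smul_apply, orient_apply, smul_eq_mul]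
  ring

lemma edgeFun_apply_of_wbtw {i : ZMod m} {X : ℝ × ℝ} (hX : Wbtw ℝ (Q i) X (Q (i + 1))) :
    edgeFun Q i X = 0 := by
  obtain ⟨t, -, rfl⟩ := hX
  rw [AffineMap.apply_lineMap, edgeFun_apply_left, edgeFun_apply_right,
    AffineMap.lineMap_same_apply]

lemma vertexFun_apply_self (a : ZMod m) : vertexFun Q a (Q a) = 0 := by
  have h := edgeFun_apply_right (Q := Q) (a - 1)
  rw [sub_add_cancel] at h
  simp only [vertexFun, AffineMap.coe_add, Pi.add_apply, h, edgeFun_apply_left, add_zero]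

lemma card_sOppSide_add_card_mem_lt_two_of_forall_orient_nonpos [NeZero m]
    (hQ : Function.Injective Q) {Z : ℝ × ℝ} {a : ZMod m} (hZ : Z ∉ Set.range Q)
    (ha : ∀ i, orient Z (Q a) (Q i) ≤ 0) :
    #{i | (affineSpan ℝ (({Q a, Z} : Finset (ℝ × ℝ)) : Set (ℝ × ℝ))).SOppSide
        (Q i) (Q (i + 1))} + #{b | Q b ∈ ({Q a, Z} : Finset (ℝ × ℝ))} < 2 := by
  rw [filter_false_of_mem, card_empty, zero_add]
  · refine (card_le_one.2 fun b hb b' hb' => ?_).trans_lt one_lt_two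
    simp only [mem_filter, mem_univ, true_and, mem_insert, mem_singleton] at hb hb'
    rcases hb with hb | hb <;> rcases hb' with hb' | hb'
    exacts [hQ (hb.trans hb'.symm), (hZ ⟨b', hb'⟩).elim, (hZ ⟨b, hb⟩).elim, (hZ ⟨b, hb⟩).elim]
  · intro i _ h
    rw [coe_pair, Set.pair_comm] at h
    exact (mul_nonneg_of_nonpos_of_nonpos (ha i) (ha (i + 1))).not_gt
      (h.mul_apply_neg (orient_eq_zero_iff fun h => hZ ⟨a, h.symm⟩))

namespace IsConvexCycle

lemma edgeFun_pos (hQ : IsConvexCycle m (Set.range Q) Q) (hm : 3 ≤ m)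
    {i j : ZMod m} (hji : j ≠ i) (hji' : j ≠ i + 1) : 0 < edgeFun Q i (Q j) := by
  obtain ⟨hinj, -, hside⟩ := hQ
  have h3 : i + 2 ≠ i + 1 := by
    rw [show i + 2 = i + 1 + 1 by ring]
    exact ZMod.add_one_ne_self (by omega) _
  have hss := hside i (Q j) ⟨j, rfl⟩ (Q (i + 2)) ⟨i + 2, rfl⟩ (by simp [hinj.eq_iff, hji, hji'])
    (by simp [hinj.eq_iff, ZMod.add_two_ne_self hm, h3])
  have := hss.mul_apply_pos
    (orient_eq_zero_iff fun h => ZMod.add_one_ne_self (by omega) i (hinj h).symm)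
  simp only [edgeFun, AffineMap.coe_smul, Pi.smul_apply, smul_eq_mul]
  linarith

lemma edgeFun_nonneg (hQ : IsConvexCycle m (Set.range Q) Q) (hm : 3 ≤ m)
    (i j : ZMod m) : 0 ≤ edgeFun Q i (Q j) := by
  by_cases hji : j = i
  · rw [hji, edgeFun_apply_left]
  by_cases hji' : j = i + 1
  · rw [hji', edgeFun_apply_right]
  exact (hQ.edgeFun_pos hm hji hji').le

lemma edgeFun_pos_of_sbtw (hQ : IsConvexCycle m (Set.range Q) Q) (hm : 3 ≤ m)
    {i j : ZMod m} {X : ℝ × ℝ} (hX : Sbtw ℝ (Q j) X (Q (j + 1)))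
    (hji : j ≠ i) : 0 < edgeFun Q i X := by
  refine hX.apply_pos (hQ.edgeFun_nonneg hm i j) (hQ.edgeFun_nonneg hm i (j + 1)) ?_
  by_cases hji' : j = i + 1
  · subst hji'
    refine .inr (hQ.edgeFun_pos hm ?_ (ZMod.add_one_ne_self (by omega) _))
    rw [add_assoc, one_add_one_eq_two]
    exact ZMod.add_two_ne_self hm i
  · exact .inl (hQ.edgeFun_pos hm hji hji')

lemma vertexFun_pos (hQ : IsConvexCycle m (Set.range Q) Q) (hm : 3 ≤ m)
    {a j : ZMod m} (hja : j ≠ a) : 0 < vertexFun Q a (Q j) := by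
  simp only [vertexFun, AffineMap.coe_add, Pi.add_apply]
  by_cases hja' : j = a + 1
  · subst hja'
    have h : a + 1 ≠ a - 1 := by
      rw [show a + 1 = a - 1 + 2 by ring]
      exact ZMod.add_two_ne_self hm _
    have := hQ.edgeFun_pos hm h (by rw [sub_add_cancel]; exact hja)
    linarith [hQ.edgeFun_nonneg hm a (a + 1)]
  · linarith [hQ.edgeFun_pos hm hja hja', hQ.edgeFun_nonneg hm (a - 1) j]

lemma vertexFun_pos_of_sbtw (hQ : IsConvexCycle m (Set.range Q) Q) (hm : 3 ≤ m)
    {a j : ZMod m} {X : ℝ × ℝ} (hX : Sbtw ℝ (Q j) X (Q (j + 1)))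
    (hja : j ≠ a) (hja' : j + 1 ≠ a) : 0 < vertexFun Q a X :=
  hX.apply_pos (hQ.vertexFun_pos hm hja).le (hQ.vertexFun_pos hm hja').le
    (.inl (hQ.vertexFun_pos hm hja))

lemma notMem_convexHull_sdiff (hQ : IsConvexCycle m (Set.range Q) Q) (hm : 3 ≤ m)
    (a : ZMod m) : Q a ∉ convexHull ℝ (Set.range Q \ {Q a}) := by
  have hsub : Set.range Q \ {Q a} ⊆ vertexFun Q a ⁻¹' Set.Ioi 0 := by
    rintro _ ⟨⟨j, rfl⟩, hj⟩
    exact hQ.vertexFun_pos hm fun h => hj (h ▸ rfl)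
  intro h
  have := convexHull_min hsub ((convex_Ioi 0).affine_preimage _) h
  simp [vertexFun_apply_self] at this

lemma extremePoints_convexHull (hQ : IsConvexCycle m (Set.range Q) Q) (hm : 3 ≤ m) :
    (convexHull ℝ (Set.range Q)).extremePoints ℝ = Set.range Q := by
  have : NeZero m := ⟨by omega⟩
  refine extremePoints_convexHull_subset.antisymm ?_
  rintro _ ⟨a, rfl⟩
  exact mem_extremePoints_convexHull_of_notMem_convexHull_sdiff (Set.finite_range Q) ⟨a, rfl⟩
    (hQ.notMem_convexHull_sdiff hm a)

lemma card_sOppSide_add_card_mem_le_two [NeZero m] (hQ : IsConvexCycle m (Set.range Q) Q)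
    (hm : 3 ≤ m) {e : Finset (ℝ × ℝ)} (he : #e = 2) :
    #{i | (affineSpan ℝ (e : Set (ℝ × ℝ))).SOppSide (Q i) (Q (i + 1))} + #{a | Q a ∈ e} ≤ 2 := by
  obtain ⟨R, S, -, rfl⟩ := card_eq_two.1 he
  simp only [coe_pair]
  have hoff : ∀ {a j}, Q a ∈ ({R, S} : Finset (ℝ × ℝ)) →
      line[ℝ, R, S].SOppSide (Q j) (Q (j + 1)) → j ≠ a ∧ j + 1 ≠ a := by
    intro a j ha hj
    replace ha : Q a ∈ line[ℝ, R, S] := subset_affineSpan ℝ _ (by simpa using ha)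
    exact ⟨fun h => hj.2.1 (h ▸ ha), fun h => hj.2.2 (h ▸ ha)⟩
  -- a vertex on the line and a crossing point of a separated edge are zeros of their own
  -- functionals, at which the functional of every other witness is positive
  rw [← card_disjSum]
  refine card_le_two_of_forall_exists_zero (g := Sum.elim (edgeFun Q) (vertexFun Q))
    (R := R) (S := S) ?_
  rintro (i | a) hw <;>
    simp only [inl_mem_disjSum, inr_mem_disjSum, mem_filter, mem_univ, true_and] at hw
  · obtain ⟨X, hXL, hX⟩ := hw.exists_sbtw
    refine ⟨X, hXL, edgeFun_apply_of_wbtw hX.wbtw, ?_⟩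
    rintro (j | b) hw' hne <;>
      simp only [inl_mem_disjSum, inr_mem_disjSum, mem_filter, mem_univ, true_and] at hw'
    · exact hQ.edgeFun_pos_of_sbtw hm hX fun h => hne (congrArg Sum.inl h.symm)
    · exact hQ.vertexFun_pos_of_sbtw hm hX (hoff hw' hw).1 (hoff hw' hw).2
  · refine ⟨Q a, subset_affineSpan ℝ _ (by simpa using hw), vertexFun_apply_self a, ?_⟩
    rintro (j | b) hw' hne <;>
      simp only [inl_mem_disjSum, inr_mem_disjSum, mem_filter, mem_univ, true_and] at hw'
    · exact hQ.edgeFun_pos hm (hoff hw hw').1.symm (hoff hw hw').2.symm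
    · exact hQ.vertexFun_pos hm fun h => hne (congrArg Sum.inr h.symm)

lemma ncard_hullVertices (hQ : IsConvexCycle m (Set.range Q) Q) (hm : 3 ≤ m)
    {Pts : Finset (ℝ × ℝ)} (hQPts : ∀ i, Q i ∈ Pts)
    (hPts : ∀ x ∈ Pts, x ∈ convexHull ℝ (Set.range Q)) : (hullVertices Pts).ncard = m := by
  have hhull : convexHull ℝ (Pts : Set (ℝ × ℝ)) = convexHull ℝ (Set.range Q) :=
    (convexHull_min hPts (convex_convexHull ℝ _)).antisymm
      (convexHull_mono (Set.range_subset_iff.2 hQPts))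
  rw [hullVertices, hhull, hQ.extremePoints_convexHull hm, Set.ncard_range_of_injective hQ.1,
    Nat.card_zmod]

lemma sum_sepCount_add_lt [NeZero m] (hQ : IsConvexCycle m (Set.range Q) Q) (hm : 3 ≤ m)
    {Pts : Finset (ℝ × ℝ)} (hQPts : ∀ i, Q i ∈ Pts) {e : Finset (ℝ × ℝ)}
    (he : e ∈ powersetCard 2 Pts)
    (hlt : #{i | (affineSpan ℝ (e : Set (ℝ × ℝ))).SOppSide (Q i) (Q (i + 1))} +
      #{a | Q a ∈ e} < 2) :
    ∑ i, sepCount Pts (Q i) (Q (i + 1)) + m * (#Pts - 1) < #Pts * (#Pts - 1) := by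
  have hpair : ∀ e ∈ powersetCard 2 Pts, #{x ∈ Pts | x ∈ e} = 2 := fun e he => by
    rw [filter_mem_eq_inter, inter_eq_right.2 (mem_powersetCard.1 he).1,
      (mem_powersetCard.1 he).2]
  calc ∑ i, sepCount Pts (Q i) (Q (i + 1)) + m * (#Pts - 1)
      = ∑ e ∈ powersetCard 2 Pts,
          (#{i | (affineSpan ℝ (e : Set (ℝ × ℝ))).SOppSide (Q i) (Q (i + 1))} +
            #{a | Q a ∈ e}) := by
        rw [sum_add_distrib, sum_card_filter_mem_powersetCard_two fun a _ => hQPts a, card_univ,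
          ZMod.card]
        simp_rw [sepCount_eq_card_filter]
        congr 1
        exact sum_card_bipartiteAbove_eq_sum_card_bipartiteBelow _
    _ < ∑ e ∈ powersetCard 2 Pts, #{x ∈ Pts | x ∈ e} := by
        refine sum_lt_sum (fun e he => ?_) ⟨e, he, ?_⟩ <;> rw [hpair _ ‹_›]
        · exact hQ.card_sOppSide_add_card_mem_le_two hm (mem_powersetCard.1 he).2
        · exact hlt
    _ = #Pts * (#Pts - 1) := sum_card_filter_mem_powersetCard_two fun _ => id

end IsConvexCycle

end ConvexCycle

theorem sepCount_cyclic_sum_lt_of_ne_hull_size_general (n k m : ℕ) (Pts : Finset (ℝ × ℝ))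
    (hcard : Pts.card = n)
    (hk : (hullVertices Pts).ncard = k)
    (hm3 : 3 ≤ m) (hmk : m ≠ k)
    (Q : ZMod m → ℝ × ℝ) (hQmem : ∀ i, Q i ∈ Pts)
    (hconv : IsConvexCycle m (Set.range Q) Q) :
    (∑ i ∈ Finset.range m, (sepCount Pts (Q i) (Q (i + 1)) : ℤ))
      < (n : ℤ)^2 - (m + 1) * n + m := by
  have : NeZero m := ⟨by omega⟩
  obtain ⟨Z, hZ, hZout⟩ : ∃ Z ∈ Pts, Z ∉ convexHull ℝ (Set.range Q) := by
    by_contra! h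
    exact hmk (hk ▸ (hconv.ncard_hullVertices hm3 hQmem h).symm)
  have hZQ : Z ∉ Set.range Q := fun h => hZout (subset_convexHull ℝ _ h)
  obtain ⟨a, ha⟩ := exists_forall_orient_nonpos hZout
  have hlt := hconv.sum_sepCount_add_lt hm3 hQmem
    (mem_powersetCard.2 ⟨insert_subset (hQmem a) (singleton_subset_iff.2 hZ),
      card_pair fun h => hZQ ⟨a, h⟩⟩)
    (card_sOppSide_add_card_mem_lt_two_of_forall_orient_nonpos hconv.1 hZQ ha)
  have hn : 1 ≤ n := hcard ▸ card_pos.2 ⟨Q 0, hQmem 0⟩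
  rw [ZMod.sum_range_natCast fun i => (sepCount Pts (Q i) (Q (i + 1)) : ℤ)]
  rw [hcard] at hlt
  zify [hn] at hlt
  linarith

/-- If the convex hull of a configuration of `n` points in general position has size `k`,
and `Q` lists `m` points of the configuration (`3 ≤ m ≤ n`, `m ≠ k`) in convex position, in
their cyclic order, then the cyclic sum of the numbers of separating lines is strictly less
than `n² - (m+1)n + m`. -/
theorem sepCount_cyclic_sum_lt_of_ne_hull_size (n k m : ℕ) (Pts : Finset (ℝ × ℝ))
    (hgen : GenPos Pts) (hcard : Pts.card = n)
    (hk : (hullVertices Pts).ncard = k)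
    (hm3 : 3 ≤ m) (hmn : m ≤ n) (hmk : m ≠ k)
    (Q : ZMod m → ℝ × ℝ) (hQmem : ∀ i, Q i ∈ Pts)
    (hconv : IsConvexCycle m (Set.range Q) Q) :
    (∑ i ∈ Finset.range m, (sepCount Pts (Q i) (Q (i + 1)) : ℤ))
      < (n : ℤ)^2 - (m + 1) * n + m :=
  sepCount_cyclic_sum_lt_of_ne_hull_size_general n k m Pts hcard hk hm3 hmk Q hQmem hconv

end
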